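/- Under the TI-with-exceptions kernel ridge regression setup, for every training pair (j,k) ∈ T the model prediction satisfies f(j,k) = m·y_{(j,k)} + (1 − m)(r_j − r_k), where m := α/(α + c̃⁻¹) and r_j := δ_o(b̄_j − b̄_{j−1}) + δ_o·h̄·([j = p] − [j = q]). -/

import Mathlib

open Real Matrix Finset

noncomputable section

namespace TIExc

/-- Real inverse hyperbolic cosine. -/
def arcosh (x : ℝ) : ℝ := Real.log (x + Real.sqrt (x ^ 2 - 1))

/-- Training index set: adjacent pairs in both orders plus the exception pair in both orders. -/
def T (n p q : ℕ) : Finset (ℕ × ℕ) :=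
  ((Finset.Icc 1 (n - 1)).image fun j => (j, j + 1)) ∪
    ((Finset.Icc 1 (n - 1)).image fun j => (j + 1, j)) ∪ {(p, q), (q, p)}

/-- Exchangeable kernel on ordered pairs of items. -/
def ker (κs κo κd : ℝ) (u u' : ℕ × ℕ) : ℝ :=
  if u = u' then κs else if u.1 = u'.1 ∨ u.2 = u'.2 then κo else κd

/-- Training labels. -/
def lab (p q : ℕ) (u : ℕ × ℕ) : ℝ :=
  if u = (p, q) then 1 else if u = (q, p) then -1 else if u.1 < u.2 then 1 else -1

/-- The training-set kernel matrix. -/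
def Kmat (n p q : ℕ) (κs κo κd : ℝ) : Matrix ↥(T n p q) ↥(T n p q) ℝ :=
  fun u u' => ker κs κo κd u.1 u'.1

/-- Dual coefficients `a = (K + c⁻¹ I)⁻¹ y`. -/
def dual (n p q : ℕ) (κs κo κd c : ℝ) : ↥(T n p q) → ℝ :=
  (Kmat n p q κs κo κd + c⁻¹ • (1 : Matrix ↥(T n p q) ↥(T n p q) ℝ))⁻¹ *ᵥ
    fun u => lab p q u.1

/-- Dual coefficient at an ordered pair (`0` off the training set). -/
def aAt (n p q : ℕ) (κs κo κd c : ℝ) (u : ℕ × ℕ) : ℝ :=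
  if h : u ∈ T n p q then dual n p q κs κo κd c ⟨u, h⟩ else 0

/-- `b̄ⱼ = a₍ⱼ,ⱼ₊₁₎`, with the convention `b̄₀ = b̄ₙ = 0`. -/
def bbar (n p q : ℕ) (κs κo κd c : ℝ) (j : ℕ) : ℝ :=
  aAt n p q κs κo κd c (j, j + 1)

/-- `h̄ = a₍ₚ,q₎`. -/
def hbar (n p q : ℕ) (κs κo κd c : ℝ) : ℝ :=
  aAt n p q κs κo κd c (p, q)

/-- Model prediction `f(u) = ∑_{u' ∈ T} κ(u,u') a_{u'}`. -/
def pred (n p q : ℕ) (κs κo κd c : ℝ) (u : ℕ × ℕ) : ℝ :=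
  ∑ u' : ↥(T n p q), ker κs κo κd u u'.1 * dual n p q κs κo κd c u'

/-- Emergent rank `rⱼ = δₒ(b̄ⱼ − b̄ⱼ₋₁) + δₒ h̄ ([j = p] − [j = q])`. -/
def rank (n p q : ℕ) (κs κo κd c : ℝ) (j : ℕ) : ℝ :=
  (κo - κd) * (bbar n p q κs κo κd c j - bbar n p q κs κo κd c (j - 1)) +
    (κo - κd) * hbar n p q κs κo κd c *
      ((if j = p then 1 else 0) - (if j = q then 1 else 0))

/-- `λ = arccosh((1 + c̃⁻¹)/(1 − α))`. -/
def lam (α ctil : ℝ) : ℝ := arcosh ((1 + ctil⁻¹) / (1 - α))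

/-- The no-exception TI rank `r_j^TI`. -/
def rTI (n : ℕ) (l : ℝ) (j : ℕ) : ℝ :=
  Real.sinh ((((n : ℝ) + 1) / 2 - (j : ℝ)) * l) /
    (Real.sinh (((n : ℝ) + 1) / 2 * l) - Real.sinh (((n : ℝ) - 1) / 2 * l))

/-- `D̃ᵢⱼ = cosh((min(i,j) − 1/2)λ)·cosh((n − max(i,j) + 1/2)λ)`. -/
def Dtil (n : ℕ) (l : ℝ) (i j : ℕ) : ℝ :=
  Real.cosh (((min i j : ℕ) - (1 : ℝ) / 2) * l) *
    Real.cosh (((n : ℝ) - (max i j : ℕ) + 1 / 2) * l)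

/-- The quantity `G`. -/
def Gq (n p q : ℕ) (l : ℝ) : ℝ :=
  Real.cosh (((q : ℝ) - 1 / 2) * l) *
      Real.sinh (((n : ℝ) - ((p : ℝ) + (q : ℝ) - 1) / 2) * l) +
    Real.cosh (((n : ℝ) - (p : ℝ) + 1 / 2) * l) *
      Real.sinh ((((p : ℝ) + (q : ℝ) - 1) / 2) * l)

end TIExc

/-!
The kernel decomposes as `κ(u, u') = κ_d + δ_o ([j = j'] + [k = k']) + (δ_s - 2 δ_o) [u = u']`,
a nonnegative combination of Gram matrices, so `K + c⁻¹ I` is positive definite and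
`(K + c⁻¹ I) a = y`. Since `T` and `κ` are invariant and `y` is antisymmetric under the swap
`(j, k) ↦ (k, j)`, `a` is antisymmetric too: hence `∑ a = 0`, and the column sums of `a` are
minus its row sums. The row sum at `j` is `r_j / δ_o`, because the training pairs starting at `j` are
`(j, j ± 1)` and possibly an exception pair. Expanding the kernel therefore gives
`f(j, k) = r_j - r_k + (δ_s - 2 δ_o) a_{(j,k)}`, and eliminating `a_{(j,k)} = c (y - f)(j, k)`
from this identity yields the mixture with weight `m`.
-/

lemma Matrix.posSemidef_of_ite_eq {ι β R : Type*} [Fintype ι] [DecidableEq β] [Ring R]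
    [PartialOrder R] [StarRing R] [StarOrderedRing R] (g : ι → β) :
    (Matrix.of fun u v => if g u = g v then (1 : R) else 0).PosSemidef := by
  let B : Matrix ι (Set.range g) R := Matrix.of fun u b => if g u = b then 1 else 0
  convert Matrix.posSemidef_self_mul_conjTranspose B
  ext u v
  simp only [B, Matrix.of_apply, Matrix.mul_apply, Matrix.conjTranspose_apply]
  rw [Fintype.sum_eq_single ⟨g u, u, rfl⟩]
  · simp [eq_comm, apply_ite star]
  · rintro ⟨b, hb⟩ hne
    have : g u ≠ b := fun h => hne (Subtype.ext h.symm)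
    simp [this]

/-- No invertibility is needed: `Matrix.inv_submatrix_equiv` also holds for the junk inverse. -/
lemma Matrix.inv_mulVec_comp_equiv {m R : Type*} [Fintype m] [DecidableEq m] [CommRing R]
    {A : Matrix m m R} (e : m ≃ m) (hA : A.submatrix e e = A) (y : m → R) :
    (A⁻¹ *ᵥ y) ∘ e = A⁻¹ *ᵥ (y ∘ e) := by
  conv_rhs => rw [← hA, Matrix.inv_submatrix_equiv, Matrix.submatrix_mulVec_equiv]
  simp [Function.comp_def]

namespace TIExc

lemma mem_T_iff {n p q j k : ℕ} :
    (j, k) ∈ T n p q ↔ (1 ≤ j ∧ j ≤ n - 1 ∧ k = j + 1) ∨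
      (1 ≤ k ∧ k ≤ n - 1 ∧ j = k + 1) ∨ (j = p ∧ k = q) ∨ (j = q ∧ k = p) := by
  simp only [T, mem_union, mem_image, mem_Icc, mem_insert, mem_singleton, Prod.ext_iff]
  grind

lemma swap_mem_T_iff {n p q : ℕ} {u : ℕ × ℕ} : u.swap ∈ T n p q ↔ u ∈ T n p q := by
  rcases u with ⟨j, k⟩
  rw [Prod.swap_prod_mk, mem_T_iff, mem_T_iff]
  omega

def swapT (n p q : ℕ) : T n p q ≃ T n p q :=
  (Equiv.prodComm ℕ ℕ).subtypeEquiv fun _ => swap_mem_T_iff.symm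

@[simp] lemma swapT_coe {n p q : ℕ} (u : T n p q) : (swapT n p q u : ℕ × ℕ) = u.1.swap := rfl

lemma lab_swap {n p q : ℕ} (hgap : 2 ≤ p - q) {u : ℕ × ℕ} (hu : u ∈ T n p q) :
    lab p q u.swap = -lab p q u := by
  rcases u with ⟨j, k⟩
  rw [mem_T_iff] at hu
  simp only [lab, Prod.swap_prod_mk, Prod.mk.injEq]
  split_ifs <;> first | (exfalso; omega) | norm_num

section Kernel

variable (κs κo κd : ℝ)

lemma ker_eq_sum_ite (u v : ℕ × ℕ) :
    ker κs κo κd u v = κd + (κo - κd) * ((if u.1 = v.1 then 1 else 0) +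
      (if u.2 = v.2 then 1 else 0)) + (κs - 2 * κo + κd) * (if u = v then 1 else 0) := by
  rcases u with ⟨j, k⟩; rcases v with ⟨j', k'⟩
  simp only [ker, Prod.mk.injEq]
  split_ifs <;> first | (exfalso; omega) | ring

lemma ker_swap (u v : ℕ × ℕ) : ker κs κo κd u.swap v.swap = ker κs κo κd u v := by
  simp only [ker, Prod.swap_inj, Prod.fst_swap, Prod.snd_swap, or_comm]

variable {κs κo κd}

lemma posSemidef_ker (hκd : 0 ≤ κd) (hκo : κd ≤ κo) (hκs : 2 * (κo - κd) ≤ κs - κd)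
    (s : Finset (ℕ × ℕ)) : (Matrix.of fun u v : s => ker κs κo κd u v).PosSemidef := by
  have hdecomp : (Matrix.of fun u v : s => ker κs κo κd u v) =
      κd • Matrix.of (fun _ _ : s => (1 : ℝ)) +
      (κo - κd) • (Matrix.of (fun u v : s => if u.1.1 = v.1.1 then (1 : ℝ) else 0) +
        Matrix.of (fun u v : s => if u.1.2 = v.1.2 then (1 : ℝ) else 0)) +
      (κs - 2 * κo + κd) • (1 : Matrix s s ℝ) := by
    ext u v
    simp only [ker_eq_sum_ite, Matrix.of_apply, Matrix.add_apply, Matrix.smul_apply,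
      Matrix.one_apply, Subtype.ext_iff, smul_eq_mul]
    ring
  have hones : (Matrix.of fun _ _ : s => (1 : ℝ)).PosSemidef := by
    simpa using Matrix.posSemidef_of_ite_eq (R := ℝ) fun _ : s => ()
  rw [hdecomp]
  exact .add (.add (hones.smul hκd)
    (((Matrix.posSemidef_of_ite_eq _).add (Matrix.posSemidef_of_ite_eq _)).smul (by linarith)))
    (Matrix.PosSemidef.one.smul (by linarith))

lemma posDef_Kmat_add_smul_one {n p q : ℕ} {c : ℝ} (hκd : 0 ≤ κd) (hκo : κd ≤ κo)
    (hκs : 2 * (κo - κd) ≤ κs - κd) (hc : 0 < c) :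
    (Kmat n p q κs κo κd + c⁻¹ • 1).PosDef :=
  .posSemidef_add (posSemidef_ker hκd hκo hκs _) (Matrix.PosDef.one.smul (inv_pos.mpr hc))

end Kernel

section Dual

variable {n p q : ℕ} (κs κo κd c : ℝ)

lemma Kmat_add_smul_one_submatrix_swapT :
    (Kmat n p q κs κo κd + c⁻¹ • 1).submatrix (swapT n p q) (swapT n p q) =
      Kmat n p q κs κo κd + c⁻¹ • 1 := by
  ext u v
  simp [Kmat, ker_swap, Matrix.one_apply]

lemma dual_swapT (hgap : 2 ≤ p - q) (u : T n p q) :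
    dual n p q κs κo κd c (swapT n p q u) = -dual n p q κs κo κd c u := by
  have hy : (fun u : T n p q => lab p q u.1) ∘ swapT n p q = -fun u => lab p q u.1 :=
    funext fun u => lab_swap hgap u.2
  have h := congrFun (Matrix.inv_mulVec_comp_equiv (swapT n p q)
    (Kmat_add_smul_one_submatrix_swapT κs κo κd c) fun u => lab p q u.1) u
  rwa [hy, Matrix.mulVec_neg] at h

@[simp] lemma aAt_coe (u : T n p q) : aAt n p q κs κo κd c u = dual n p q κs κo κd c u :=
  dif_pos u.2

lemma aAt_swap (hgap : 2 ≤ p - q) (j k : ℕ) :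
    aAt n p q κs κo κd c (k, j) = -aAt n p q κs κo κd c (j, k) := by
  by_cases h : (j, k) ∈ T n p q
  · have h' : (k, j) ∈ T n p q := swap_mem_T_iff.mpr h
    rw [aAt, aAt, dif_pos h, dif_pos h']
    exact dual_swapT κs κo κd c hgap ⟨(j, k), h⟩
  · have h' : (k, j) ∉ T n p q := fun h' => h (swap_mem_T_iff.mpr h')
    simp [aAt, h, h']

lemma aAt_sub_one (hgap : 2 ≤ p - q) (j : ℕ) :
    aAt n p q κs κo κd c (j, j - 1) = -bbar n p q κs κo κd c (j - 1) := by
  rcases j with _ | m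
  · have h00 : (0, 0) ∉ T n p q := by rw [mem_T_iff]; omega
    have h01 : (0, 1) ∉ T n p q := by rw [mem_T_iff]; omega
    simp [bbar, aAt, h00, h01]
  · exact aAt_swap κs κo κd c hgap m (m + 1)

lemma pred_add_inv_mul_dual_eq_lab (hκd : 0 ≤ κd) (hκo : κd ≤ κo)
    (hκs : 2 * (κo - κd) ≤ κs - κd) (hc : 0 < c) (u : T n p q) :
    pred n p q κs κo κd c u + c⁻¹ * dual n p q κs κo κd c u = lab p q u := by
  have hM := (posDef_Kmat_add_smul_one (n := n) (p := p) (q := q) hκd hκo hκs hc).isUnit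
  have h : (Kmat n p q κs κo κd + c⁻¹ • 1) *ᵥ dual n p q κs κo κd c =
      fun u => lab p q u.1 := by
    rw [dual, Matrix.mulVec_mulVec, Matrix.mul_nonsing_inv _
      ((Matrix.isUnit_iff_isUnit_det _).mp hM), Matrix.one_mulVec]
  rw [Matrix.add_mulVec, Matrix.smul_mulVec, Matrix.one_mulVec] at h
  exact congrFun h u

end Dual

section Sums

variable {n p q : ℕ} (κs κo κd c : ℝ)

lemma sum_dual_eq_zero (hgap : 2 ≤ p - q) : ∑ u : T n p q, dual n p q κs κo κd c u = 0 := by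
  have h := (swapT n p q).sum_comp (dual n p q κs κo κd c)
  simp only [dual_swapT κs κo κd c hgap, sum_neg_distrib] at h
  linarith

lemma sum_snd_eq_neg_sum_fst (hgap : 2 ≤ p - q) (k : ℕ) :
    ∑ u : T n p q, (if k = u.1.2 then dual n p q κs κo κd c u else 0) =
      -∑ u : T n p q, (if k = u.1.1 then dual n p q κs κo κd c u else 0) := by
  rw [← (swapT n p q).sum_comp, ← sum_neg_distrib]
  simp only [swapT_coe, Prod.snd_swap, dual_swapT κs κo κd c hgap, neg_ite, neg_zero]

lemma sum_ite_fst_aAt (hgap : 2 ≤ p - q) (j : ℕ) :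
    ∑ v ∈ T n p q, (if j = v.1 then aAt n p q κs κo κd c v else 0) =
      bbar n p q κs κo κd c j - bbar n p q κs κo κd c (j - 1) +
        hbar n p q κs κo κd c * ((if j = p then 1 else 0) - (if j = q then 1 else 0)) := by
  -- the training pairs starting at `j` lie in `S`, whose four pairs are distinct as `p - q ≥ 2`
  set S : Finset (ℕ × ℕ) := {(j, j + 1), (j, j - 1), (p, q), (q, p)}
  have hT : ∀ v ∈ T n p q ∪ S, v ∉ T n p q →
      (if j = v.1 then aAt n p q κs κo κd c v else 0) = 0 := fun v _ hv => by
    simp [aAt, hv]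
  have hS : ∀ v ∈ T n p q ∪ S, v ∉ S →
      (if j = v.1 then aAt n p q κs κo κd c v else 0) = 0 := by
    rintro ⟨a, b⟩ hv hvS
    have hab : (a, b) ∈ T n p q := by simpa [hvS] using hv
    rw [mem_T_iff] at hab
    simp only [S, mem_insert, mem_singleton, Prod.mk.injEq, not_or] at hvS
    rw [if_neg (by omega)]
  rw [sum_subset subset_union_left hT, ← sum_subset subset_union_right hS,
    sum_insert (by simp; omega), sum_insert (by simp; omega), sum_pair (by simp; omega),
    aAt_sub_one κs κo κd c hgap, aAt_swap κs κo κd c hgap p q]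
  simp only [if_true, bbar, hbar, eq_comm (a := j)]
  split_ifs <;> ring

lemma rank_eq_mul_sum_fst (hgap : 2 ≤ p - q) (j : ℕ) :
    rank n p q κs κo κd c j =
      (κo - κd) * ∑ u : T n p q, (if j = u.1.1 then dual n p q κs κo κd c u else 0) := by
  have h : ∑ u : T n p q, (if j = u.1.1 then dual n p q κs κo κd c u else 0) =
      ∑ v ∈ T n p q, (if j = v.1 then aAt n p q κs κo κd c v else 0) := by
    simp only [← sum_coe_sort (T n p q), aAt_coe]
  rw [rank, h, sum_ite_fst_aAt κs κo κd c hgap]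
  ring

lemma pred_eq_rank_sub_rank (hgap : 2 ≤ p - q) (u : T n p q) :
    pred n p q κs κo κd c u = rank n p q κs κo κd c u.1.1 - rank n p q κs κo κd c u.1.2 +
      (κs - 2 * κo + κd) * dual n p q κs κo κd c u := by
  have hterm : ∀ v : T n p q, ker κs κo κd u v * dual n p q κs κo κd c v =
      κd * dual n p q κs κo κd c v + (κo - κd) *
        ((if u.1.1 = v.1.1 then dual n p q κs κo κd c v else 0) +
          (if u.1.2 = v.1.2 then dual n p q κs κo κd c v else 0)) +
      (κs - 2 * κo + κd) * (if u = v then dual n p q κs κo κd c v else 0) := fun v => by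
    simp only [ker_eq_sum_ite, Subtype.coe_inj]
    split_ifs <;> ring
  simp only [pred, hterm, sum_add_distrib, ← mul_sum, sum_ite_eq, mem_univ, if_true,
    sum_dual_eq_zero κs κo κd c hgap, sum_snd_eq_neg_sum_fst κs κo κd c hgap,
    rank_eq_mul_sum_fst κs κo κd c hgap]
  ring

end Sums

lemma eq_mix_of_ridge {f r a y c δs δo : ℝ} (hc : 0 < c) (hδo : 0 < δo)
    (hδ : 2 * δo ≤ δs)
    (hf : f = r + (δs - 2 * δo) * a) (hy : f + c⁻¹ * a = y) :
    f = (1 - 2 * δo / δs) / ((1 - 2 * δo / δs) + (c * δs)⁻¹) * y +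
      (1 - (1 - 2 * δo / δs) / ((1 - 2 * δo / δs) + (c * δs)⁻¹)) * r := by
  have hδs : 0 < δs := by linarith
  have hden : 0 < 1 + c * (δs - 2 * δo) := by nlinarith
  have ha : a = c * (y - f) := by rw [← hy]; field_simp; ring
  have hm : (1 - 2 * δo / δs) / ((1 - 2 * δo / δs) + (c * δs)⁻¹) =
      c * (δs - 2 * δo) / (1 + c * (δs - 2 * δo)) := by
    field_simp
    ring
  rw [hm]
  field_simp
  linear_combination hf + (δs - 2 * δo) * ha

theorem train_prediction_mixes_label_and_ranks_general
    (n p q : ℕ) (κs κo κd c : ℝ)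
    (hgap : 2 ≤ p - q)
    (hκd : 0 ≤ κd) (hκo : κd < κo) (hκs : 2 * (κo - κd) ≤ κs - κd) (hc : 0 < c) :
    ∀ j k : ℕ, (j, k) ∈ T n p q →
      pred n p q κs κo κd c (j, k) =
        ((1 - 2 * (κo - κd) / (κs - κd)) /
            ((1 - 2 * (κo - κd) / (κs - κd)) + (c * (κs - κd))⁻¹)) * lab p q (j, k) +
        (1 - (1 - 2 * (κo - κd) / (κs - κd)) /
            ((1 - 2 * (κo - κd) / (κs - κd)) + (c * (κs - κd))⁻¹)) *
          (rank n p q κs κo κd c j - rank n p q κs κo κd c k) := by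
  intro j k hjk
  refine eq_mix_of_ridge hc (sub_pos.mpr hκo) hκs ?_
    (pred_add_inv_mul_dual_eq_lab κs κo κd c hκd hκo.le hκs hc ⟨(j, k), hjk⟩)
  convert pred_eq_rank_sub_rank κs κo κd c hgap ⟨(j, k), hjk⟩ using 2
  ring

/-- On training pairs, the prediction mixes the label with the rank difference
with memorization coefficient `m = α/(α + c̃⁻¹)`, where `α = 1 − 2δₒ/δₛ` and
`c̃ = c·δₛ`. -/
theorem train_prediction_mixes_label_and_ranks
    (n p q : ℕ) (κs κo κd c : ℝ)
    (hn : 3 ≤ n) (hq1 : 1 ≤ q) (hqp : q < p) (hpn : p ≤ n) (hgap : 2 ≤ p - q)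
    (hκd : 0 ≤ κd) (hκo : κd < κo) (hκs : 2 * (κo - κd) ≤ κs - κd) (hc : 0 < c) :
    ∀ j k : ℕ, (j, k) ∈ T n p q →
      pred n p q κs κo κd c (j, k) =
        ((1 - 2 * (κo - κd) / (κs - κd)) /
            ((1 - 2 * (κo - κd) / (κs - κd)) + (c * (κs - κd))⁻¹)) * lab p q (j, k) +
        (1 - (1 - 2 * (κo - κd) / (κs - κd)) /
            ((1 - 2 * (κo - κd) / (κs - κd)) + (c * (κs - κd))⁻¹)) *
          (rank n p q κs κo κd c j - rank n p q κs κo κd c k) :=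
  train_prediction_mixes_label_and_ranks_general n p q κs κo κd c hgap hκd hκo hκs hc

end TIExc
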